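/- arXiv:1102.2932 — 5 statements merged into one kernel-verified Lean document; each statement's English description precedes it below -/
import Mathlib

section
/- Let a_1, …, a_n be n ≥ 3 distinct real numbers and let M be the n×n matrix with M_{ij} = (a_j − a_i)^2. Then rk(M) = 3. -/
/-!
Expanding `(a j - a i) ^ 2 = a j ^ 2 - 2 a i a j + a i ^ 2` writes the matrix as a product of an
`n × 3` and a `3 × n` matrix, so its rank is at most `3`. Conversely the principal `3 × 3` minor on
three distinct points is `2 (a₀ - a₁)² (a₁ - a₂)² (a₂ - a₀)² ≠ 0`, so the rank is at least `3`.
-/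

open Matrix

variable {ι R : Type*}

def sqDistMatrix [Ring R] (a : ι → R) : Matrix ι ι R :=
  of fun i j => (a j - a i) ^ 2

@[simp]
theorem sqDistMatrix_apply [Ring R] (a : ι → R) (i j : ι) :
    sqDistMatrix a i j = (a j - a i) ^ 2 :=
  rfl

theorem sqDistMatrix_submatrix [Ring R] {κ : Type*} (a : ι → R) (f : κ → ι) :
    (sqDistMatrix a).submatrix f f = sqDistMatrix (a ∘ f) :=
  rfl

theorem sqDistMatrix_eq_mul [CommRing R] (a : ι → R) :
    sqDistMatrix a =
      (of fun i k => ![1, a i, a i ^ 2] k : Matrix ι (Fin 3) R) *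
        (of fun k j => ![a j ^ 2, -2 * a j, 1] k : Matrix (Fin 3) ι R) := by
  ext i j
  simp only [sqDistMatrix_apply, mul_apply, Fin.sum_univ_three, of_apply, cons_val]
  ring

theorem rank_sqDistMatrix_le [Fintype ι] [CommRing R] [StrongRankCondition R] (a : ι → R) :
    (sqDistMatrix a).rank ≤ 3 := by
  rw [sqDistMatrix_eq_mul]
  exact (rank_mul_le_right _ _).trans ((rank_le_card_height _).trans_eq (Fintype.card_fin 3))

theorem det_sqDistMatrix_fin_three [CommRing R] (a : Fin 3 → R) :
    (sqDistMatrix a).det = 2 * (a 0 - a 1) ^ 2 * (a 1 - a 2) ^ 2 * (a 2 - a 0) ^ 2 := by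
  rw [det_fin_three]
  simp only [sqDistMatrix_apply]
  ring

theorem rank_sqDistMatrix_fin_three [Field R] [NeZero (2 : R)] {a : Fin 3 → R}
    (ha : Function.Injective a) : (sqDistMatrix a).rank = 3 := by
  have hdet : (sqDistMatrix a).det ≠ 0 := by
    simp [det_sqDistMatrix_fin_three, sub_eq_zero, ha.eq_iff, two_ne_zero]
  simpa using rank_of_isUnit _ ((isUnit_iff_isUnit_det _).mpr hdet.isUnit)

theorem three_le_rank_sqDistMatrix [Fintype ι] [Field R] [NeZero (2 : R)] {a : ι → R}
    (ha : Function.Injective a) (hι : 3 ≤ Fintype.card ι) : 3 ≤ (sqDistMatrix a).rank := by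
  obtain ⟨f⟩ : Nonempty (Fin 3 ↪ ι) := Function.Embedding.nonempty_of_card_le (by simpa using hι)
  calc 3 = (sqDistMatrix (a ∘ f)).rank := (rank_sqDistMatrix_fin_three (ha.comp f.injective)).symm
    _ = ((sqDistMatrix a).submatrix f f).rank := by rw [sqDistMatrix_submatrix]
    _ ≤ (sqDistMatrix a).rank := rank_submatrix_le _ _ _

/-- For n ≥ 3 distinct reals a₁,…,aₙ, the matrix M with Mᵢⱼ = (aⱼ - aᵢ)² has rank 3. -/
theorem euclidean_distance_matrix_rank {n : ℕ} (hn : 3 ≤ n)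
    (a : Fin n → ℝ) (ha : Function.Injective a)
    (M : Matrix (Fin n) (Fin n) ℝ) (hM : ∀ i j, M i j = (a j - a i) ^ 2) :
    M.rank = 3 := by
  obtain rfl : M = sqDistMatrix a := ext hM
  exact (rank_sqDistMatrix_le a).antisymm (three_le_rank_sqDistMatrix ha (by simpa using hn))
end

section
/- Let a_1, …, a_n be distinct real numbers and M the n×n matrix with M_{ij} = (a_j − a_i)^2. Then the nonnegative rank of M is at least log₂ n. -/
/-!
If `M = ∑ₖ uₖ vₖᵀ` with nonnegative factors, then `M i j > 0` forces some `k` with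
`uₖ i > 0` and `vₖ j > 0`, while `M j j = 0` forbids `uₖ j > 0` for that `k`. So for a
nonnegative matrix with zero diagonal and positive off-diagonal entries, the row supports
`{k | uₖ i > 0}` of a minimal factorization are pairwise distinct subsets of `Fin (mrank M)`,
whence `n ≤ 2 ^ mrank M`.
-/

/-- The nonnegative (monotone) rank of a matrix over ℝ. -/
noncomputable def mrank {S T : Type*} [Fintype S] [Fintype T] (M : Matrix S T ℝ) : ℕ :=
  sInf {r : ℕ | ∃ u : Fin r → S → ℝ, ∃ v : Fin r → T → ℝ,
    (∀ k s, 0 ≤ u k s) ∧ (∀ k t, 0 ≤ v k t) ∧ ∀ s t, M s t = ∑ k, u k s * v k t}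

section NonnegSum

variable {κ : Type*} [Fintype κ] {u v : κ → ℝ}

lemma exists_pos_pos_of_sum_mul_ne_zero (h : ∑ k, u k * v k ≠ 0)
    (hu : ∀ k, 0 ≤ u k) (hv : ∀ k, 0 ≤ v k) : ∃ k, 0 < u k ∧ 0 < v k := by
  obtain ⟨k, -, hk⟩ := Finset.exists_ne_zero_of_sum_ne_zero h
  exact ⟨k, (hu k).lt_of_ne' (left_ne_zero_of_mul hk), (hv k).lt_of_ne' (right_ne_zero_of_mul hk)⟩

lemma not_pos_pos_of_sum_mul_eq_zero (h : ∑ k, u k * v k = 0)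
    (hu : ∀ k, 0 ≤ u k) (hv : ∀ k, 0 ≤ v k) (k : κ) : ¬(0 < u k ∧ 0 < v k) := by
  rintro ⟨huk, hvk⟩
  have hk := (Finset.sum_eq_zero_iff_of_nonneg fun k _ => mul_nonneg (hu k) (hv k)).mp h k
    (Finset.mem_univ k)
  exact (mul_pos huk hvk).ne' hk

end NonnegSum

section Mrank

variable {S T : Type*} [Fintype S] [Fintype T]

lemma exists_nonneg_factorization_mrank (M : Matrix S T ℝ) (hnonneg : ∀ s t, 0 ≤ M s t) :
    ∃ u : Fin (mrank M) → S → ℝ, ∃ v : Fin (mrank M) → T → ℝ,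
      (∀ k s, 0 ≤ u k s) ∧ (∀ k t, 0 ≤ v k t) ∧ ∀ s t, M s t = ∑ k, u k s * v k t := by
  classical
  let e := Fintype.equivFin S
  refine Nat.sInf_mem (s := {r | ∃ u : Fin r → S → ℝ, ∃ v : Fin r → T → ℝ, _}) ?_
  refine ⟨Fintype.card S, fun k s => if s = e.symm k then 1 else 0, fun k t => M (e.symm k) t,
    fun k s => by positivity, fun k t => hnonneg _ t, fun s t => ?_⟩
  rw [Finset.sum_eq_single (e s) (fun k _ hk => by simp [e.eq_symm_apply, Ne.symm hk])
    (by simp)]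
  simp

lemma card_le_two_pow_mrank {ι : Type*} [Fintype ι] (M : Matrix ι ι ℝ)
    (hnonneg : ∀ i j, 0 ≤ M i j) (hdiag : ∀ i, M i i = 0) (hoff : ∀ i j, i ≠ j → M i j ≠ 0) :
    Fintype.card ι ≤ 2 ^ mrank M := by
  classical
  obtain ⟨u, v, hu, hv, hsum⟩ := exists_nonneg_factorization_mrank M hnonneg
  let rowSupport : ι → Finset (Fin (mrank M)) := fun i => {k | 0 < u k i}
  have hinj : Function.Injective rowSupport := by
    intro i j hij
    by_contra hne
    obtain ⟨k, huik, hvjk⟩ := exists_pos_pos_of_sum_mul_ne_zero (hsum i j ▸ hoff i j hne)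
      (hu · i) (hv · j)
    have hujk : 0 < u k j := by
      have hk : k ∈ rowSupport i := by simpa [rowSupport] using huik
      simpa [rowSupport, hij] using hk
    exact not_pos_pos_of_sum_mul_eq_zero (hsum j j ▸ hdiag j) (hu · j) (hv · j) k ⟨hujk, hvjk⟩
  simpa using Fintype.card_le_of_injective rowSupport hinj

end Mrank

lemma Real.logb_two_le_of_le_two_pow {n r : ℕ} (h : n ≤ 2 ^ r) : Real.logb 2 n ≤ r := by
  rcases Nat.eq_zero_or_pos n with rfl | hn
  · simp
  · rw [Real.logb_le_iff_le_rpow one_lt_two (by exact_mod_cast hn), Real.rpow_natCast]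
    exact_mod_cast h

/-- For distinct reals a₁,…,aₙ, the matrix M with Mᵢⱼ = (aⱼ - aᵢ)² has
nonnegative rank at least log₂ n. -/
theorem euclidean_distance_matrix_mrank_lower {n : ℕ}
    (a : Fin n → ℝ) (ha : Function.Injective a)
    (M : Matrix (Fin n) (Fin n) ℝ) (hM : ∀ i j, M i j = (a j - a i) ^ 2) :
    Real.logb 2 n ≤ (mrank M : ℝ) := by
  have hcard := card_le_two_pow_mrank M (fun i j => hM i j ▸ sq_nonneg _)
    (fun i => by simp [hM]) (fun i j hij => by simpa [hM, sub_eq_zero] using ha.ne hij.symm)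
  simpa using Real.logb_two_le_of_le_two_pow hcard
end

section
/- Let a_i = i for i = 1, …, n and let M be the n×n matrix with M_{ij} = (j − i)^2. Then the nonnegative rank of M is at most 2 log₂ n + 2. -/
open Set

lemma mrank_le_of_eq_sum {S T : Type*} [Fintype S] [Fintype T] {M : Matrix S T ℝ} {r : ℕ}
    (u : Fin r → S → ℝ) (v : Fin r → T → ℝ) (hu : ∀ k s, 0 ≤ u k s) (hv : ∀ k t, 0 ≤ v k t)
    (hM : ∀ s t, M s t = ∑ k, u k s * v k t) : mrank M ≤ r :=
  Nat.sInf_le ⟨u, v, hu, hv, hM⟩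

lemma sq_sub_eq_sq_abs_sub_abs_add {α : Type*} [CommRing α] [LinearOrder α]
    [IsStrictOrderedRing α] (a b : α) :
    (a - b) ^ 2 = (|a| - |b|) ^ 2 + (2 * a⁺) * (2 * b⁻) + (2 * a⁻) * (2 * b⁺) := by
  rcases le_total 0 a with ha | ha <;> rcases le_total 0 b with hb | hb <;>
    simp only [abs_of_nonneg, abs_of_nonpos, posPart_eq_self.2, posPart_eq_zero.2,
      negPart_eq_zero.2, negPart_eq_neg.2, ha, hb] <;> ring

def HasNonnegSqDistFactorization (S : Set ℝ) (r : ℕ) : Prop :=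
  ∃ u v : Fin r → ℝ → ℝ, (∀ k x, 0 ≤ u k x) ∧ (∀ k x, 0 ≤ v k x) ∧
    ∀ x ∈ S, ∀ y ∈ S, (x - y) ^ 2 = ∑ k, u k x * v k y

namespace HasNonnegSqDistFactorization

lemma of_subsingleton {S : Set ℝ} (hS : S.Subsingleton) : HasNonnegSqDistFactorization S 0 :=
  ⟨0, 0, fun k => k.elim0, fun k => k.elim0, fun x hx y hy => by simp [hS hx hy]⟩

lemma of_mapsTo_fold {S T : Set ℝ} {r : ℕ} (c : ℝ) (h : HasNonnegSqDistFactorization S r)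
    (hT : MapsTo (fun x => c - |x - c|) T S) : HasNonnegSqDistFactorization T (r + 2) := by
  obtain ⟨u, v, hu, hv, huv⟩ := h
  refine ⟨Fin.cons (fun x => 2 * (x - c)⁺) (Fin.cons (fun x => 2 * (x - c)⁻)
      fun k x => u k (c - |x - c|)),
    Fin.cons (fun y => 2 * (y - c)⁻) (Fin.cons (fun y => 2 * (y - c)⁺)
      fun k y => v k (c - |y - c|)), ?_, ?_, fun x hx y hy => ?_⟩
  · simp only [Fin.forall_fin_succ, Fin.cons_zero, Fin.cons_succ]
    exact ⟨fun _ => by positivity, fun _ => by positivity, fun k _ => hu k _⟩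
  · simp only [Fin.forall_fin_succ, Fin.cons_zero, Fin.cons_succ]
    exact ⟨fun _ => by positivity, fun _ => by positivity, fun k _ => hv k _⟩
  · simp only [Fin.sum_univ_succ, Fin.cons_zero, Fin.cons_succ, ← huv _ (hT hx) _ (hT hy)]
    linear_combination sq_sub_eq_sq_abs_sub_abs_add (x - c) (y - c)

end HasNonnegSqDistFactorization

lemma mapsTo_fold_natCast_Iio (m : ℕ) :
    MapsTo (fun x : ℝ => (m - 1 / 2) - |x - (m - 1 / 2)|)
      ((↑) '' Iio (2 * m)) ((↑) '' Iio m) := by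
  rintro _ ⟨i, hi, rfl⟩
  rw [mem_Iio] at hi
  rcases lt_or_ge i m with him | him
  · have : (i : ℝ) + 1 ≤ m := by exact_mod_cast him
    refine ⟨i, him, ?_⟩
    dsimp only
    rw [abs_of_neg (by linarith)]
    ring
  · have : (m : ℝ) ≤ i := by exact_mod_cast him
    refine ⟨2 * m - 1 - i, by rw [mem_Iio]; omega, ?_⟩
    dsimp only
    rw [abs_of_nonneg (by linarith), Nat.cast_sub (by omega), Nat.cast_sub (by omega)]
    push_cast
    ring

lemma hasNonnegSqDistFactorization_natCast_Iio_two_pow (L : ℕ) :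
    HasNonnegSqDistFactorization ((↑) '' Iio (2 ^ L)) (2 * L) := by
  induction L with
  | zero => exact .of_subsingleton (by simp)
  | succ L ih =>
    rw [pow_succ', mul_add_one]
    exact ih.of_mapsTo_fold _ (mapsTo_fold_natCast_Iio _)

lemma Nat.clog_le_logb_add_one (b n : ℕ) : (Nat.clog b n : ℝ) ≤ Real.logb b n + 1 := by
  have hlog : 0 ≤ Real.logb b n :=
    div_nonneg (Real.log_natCast_nonneg n) (Real.log_natCast_nonneg b)
  rw [← Real.natCeil_logb_natCast]
  exact_mod_cast (Nat.ceil_lt_add_one hlog).le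

/-- For aᵢ = i, the matrix M with Mᵢⱼ = (j - i)² has nonnegative rank at most 2·log₂ n + 2. -/
theorem hrubes_upper_bound {n : ℕ}
    (M : Matrix (Fin n) (Fin n) ℝ)
    (hM : ∀ i j, M i j = (((j : ℕ) : ℝ) - ((i : ℕ) : ℝ)) ^ 2) :
    (mrank M : ℝ) ≤ 2 * Real.logb 2 n + 2 := by
  set L := Nat.clog 2 n
  obtain ⟨u, v, hu, hv, huv⟩ := hasNonnegSqDistFactorization_natCast_Iio_two_pow L
  have hn : n ≤ 2 ^ L := Nat.le_pow_clog one_lt_two n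
  have hmem (i : Fin n) : ((i : ℕ) : ℝ) ∈ ((↑) '' Iio (2 ^ L) : Set ℝ) :=
    ⟨i, i.isLt.trans_le hn, rfl⟩
  have hrank : mrank M ≤ 2 * L :=
    mrank_le_of_eq_sum (fun k i => v k i) (fun k j => u k j) (fun k _ => hv k _)
      (fun k _ => hu k _) fun i j => by
        simp only [hM, huv _ (hmem j) _ (hmem i), mul_comm]
  calc (mrank M : ℝ) ≤ 2 * L := by exact_mod_cast hrank
    _ ≤ 2 * (Real.logb 2 n + 1) := by gcongr; exact_mod_cast Nat.clog_le_logb_add_one 2 n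
    _ = 2 * Real.logb 2 n + 2 := by ring
end

section
/- Let d ≥ 2 and n ≥ 1, and define the tensor M : [n]^d → {0,1} by M(i_1,…,i_d) = 1 if and only if i_1 + ⋯ + i_d is divisible by n. Then the nonnegative (monotone) tensor rank of M equals n^{d−1}. -/
/-- The nonnegative (monotone) tensor rank of a d-dimensional tensor on [n]^d. -/
noncomputable def tmrank (d n : ℕ) (M : (Fin d → Fin n) → ℝ) : ℕ :=
  sInf {r : ℕ | ∃ v : Fin r → Fin d → Fin n → ℝ,
    (∀ k j x, 0 ≤ v k j x) ∧
    ∀ i : Fin d → Fin n, M i = ∑ k, ∏ j, v k j (i j)}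

/-!
A nonnegative decomposition of a tensor `M` must cover each point of its support by a rank-one
term that is positive at every coordinate of that point. If two support points `a ≠ b` were
covered by the same term, that term would also be positive at the point obtained from `a` by
changing one coordinate to the value of `b`, which therefore lies in the support. For the
divisibility tensor this cannot happen, since a point of the support is determined by all but
one of its coordinates. Hence the rank is at least the size of the support, `n ^ (d - 1)`, and
the sum of the indicators of the support points shows equality.
-/

open Finset Function

/-- `S` is an independent set of the Hamming graph: no two of its points differ in exactly one
coordinate. -/
def IsHammingIndependent {ι α : Type*} [DecidableEq ι] (S : Set (ι → α)) : Prop :=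
  ∀ a ∈ S, ∀ j x, update a j x ∈ S → x = a j

theorem card_support_le_of_eq_sum_prod {ι α κ : Type*} [Fintype ι] [DecidableEq ι] [Fintype κ]
    {M : (ι → α) → ℝ} (hS : IsHammingIndependent (support M))
    (v : κ → ι → α → ℝ) (hv : ∀ k j x, 0 ≤ v k j x)
    (hM : ∀ i, M i = ∑ k, ∏ j, v k j (i j)) :
    Nat.card (support M) ≤ Fintype.card κ := by
  have hpos : ∀ i : support M, ∃ k, ∀ j, 0 < v k j (i.1 j) := by
    rintro ⟨i, hi⟩
    rw [mem_support, hM] at hi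
    obtain ⟨k, -, hk⟩ := exists_ne_zero_of_sum_ne_zero hi
    exact ⟨k, fun j => (hv k j _).lt_of_ne' (prod_ne_zero_iff.mp hk j (mem_univ j))⟩
  choose φ hφ using hpos
  suffices Function.Injective φ by simpa using Nat.card_le_card_of_injective φ this
  intro a b hab
  by_contra hne
  obtain ⟨j₀, hj₀⟩ : ∃ j₀, a.1 j₀ ≠ b.1 j₀ := by
    by_contra! h
    exact hne (Subtype.ext (funext h))
  refine hj₀ (hS a a.2 j₀ (b.1 j₀) ?_).symm
  have hprod : 0 < ∏ j, v (φ a) j (update a.1 j₀ (b.1 j₀) j) := by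
    refine prod_pos fun j _ => ?_
    rcases eq_or_ne j j₀ with rfl | hj
    · simpa [hab] using hφ b j
    · simpa [hj] using hφ a j
  rw [mem_support, hM]
  refine (hprod.trans_le ?_).ne'
  exact single_le_sum (f := fun k => ∏ j, v k j (update a.1 j₀ (b.1 j₀) j))
    (fun k _ => prod_nonneg fun j _ => hv k j _) (mem_univ (φ a))

theorem exists_nonneg_decomp_indicator {d n : ℕ} (S : Finset (Fin d → Fin n)) :
    ∃ v : Fin #S → Fin d → Fin n → ℝ, (∀ k j x, 0 ≤ v k j x) ∧
      ∀ i, (if i ∈ S then 1 else 0) = ∑ k, ∏ j, v k j (i j) := by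
  refine ⟨fun k j x => if x = (S.equivFin.symm k).1 j then 1 else 0,
    fun k j x => by positivity, fun i => ?_⟩
  have hdelta (s : Fin d → Fin n) :
      (∏ j, if i j = s j then (1 : ℝ) else 0) = if i = s then 1 else 0 := by
    simp [prod_boole, funext_iff]
  simp only [hdelta]
  rw [Equiv.sum_comp S.equivFin.symm (fun s : S => if i = s.1 then (1 : ℝ) else 0),
    sum_coe_sort S (fun s => if i = s then (1 : ℝ) else 0), sum_ite_eq]

theorem tmrank_indicator_eq_card {d n : ℕ} (S : Finset (Fin d → Fin n))
    (hS : IsHammingIndependent (S : Set (Fin d → Fin n))) :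
    tmrank d n (fun i => if i ∈ S then 1 else 0) = #S := by
  have hsupp : support (fun i => if i ∈ S then (1 : ℝ) else 0) = S := by ext; simp
  apply le_antisymm (Nat.sInf_le (exists_nonneg_decomp_indicator S))
  refine le_csInf ⟨_, exists_nonneg_decomp_indicator S⟩ fun r ⟨v, hv, hM⟩ => ?_
  simpa [hsupp] using card_support_le_of_eq_sum_prod (hsupp ▸ hS) v hv hM

theorem card_eq_pow_of_isHammingIndependent {α : Type*} [Fintype α] {e : ℕ}
    (S : Finset (Fin (e + 1) → α)) (hS : IsHammingIndependent (S : Set (Fin (e + 1) → α)))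
    (hsnoc : ∀ f : Fin e → α, ∃ x, Fin.snoc f x ∈ S) :
    #S = Fintype.card α ^ e := by
  refine (?_ : #S = #(univ : Finset (Fin e → α))).trans (by simp)
  refine card_nbij Fin.init (fun _ _ => mem_univ _) (fun a ha b hb hab => ?_) fun f _ => ?_
  · have hb' : update a (Fin.last e) (b (Fin.last e)) = b := by
      rw [← Fin.snoc_init_self a, Fin.update_snoc_last, hab, Fin.snoc_init_self]
    have hlast := hS a ha _ _ (hb' ▸ hb)
    rw [← hb', hlast, update_eq_self]
  · obtain ⟨x, hx⟩ := hsnoc f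
    exact ⟨_, hx, Fin.init_snoc _ _⟩

theorem Fin.exists_dvd_add {n : ℕ} [NeZero n] (s : ℕ) : ∃ x : Fin n, n ∣ x + s := by
  refine ⟨⟨(-(s : ZMod n)).val, ZMod.val_lt _⟩, ?_⟩
  rw [← ZMod.natCast_eq_zero_iff]
  push_cast [ZMod.natCast_zmod_val]
  ring

theorem Fin.eq_of_dvd_add {n s : ℕ} {x y : Fin n} (hx : n ∣ x + s) (hy : n ∣ y + s) :
    x = y := by
  have h : (x : ℕ) ≡ y [MOD n] := Nat.ModEq.add_right_cancel' s <|
    (Nat.modEq_zero_iff_dvd.2 hx).trans (Nat.modEq_zero_iff_dvd.2 hy).symm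
  exact Fin.ext (by rwa [Nat.ModEq, Nat.mod_eq_of_lt x.2, Nat.mod_eq_of_lt y.2] at h)

def dvdSumSet (d n : ℕ) : Finset (Fin d → Fin n) := {i | n ∣ ∑ j, ((i j : ℕ) + 1)}

theorem isHammingIndependent_dvdSumSet (d n : ℕ) :
    IsHammingIndependent (dvdSumSet d n : Set (Fin d → Fin n)) := by
  intro a ha j x hx
  simp only [dvdSumSet, coe_filter, mem_univ, true_and, Set.mem_ofPred_eq] at ha hx
  rw [← add_sum_erase _ _ (mem_univ j), add_assoc] at ha hx
  rw [sum_congr rfl fun i hi => by rw [update_of_ne (ne_of_mem_erase hi)], update_self] at hx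
  exact Fin.eq_of_dvd_add hx ha

theorem card_dvdSumSet {d n : ℕ} (hn : 1 ≤ n) : #(dvdSumSet d n) = n ^ (d - 1) := by
  have : NeZero n := NeZero.of_pos hn
  rcases d with _ | e
  · simp [dvdSumSet]
  refine (card_eq_pow_of_isHammingIndependent _ (isHammingIndependent_dvdSumSet _ _)
    fun f => ?_).trans (by simp)
  obtain ⟨x, hx⟩ := Fin.exists_dvd_add (n := n) (∑ j, ((f j : ℕ) + 1) + 1)
  refine ⟨x, ?_⟩
  simp only [dvdSumSet, mem_filter, mem_univ, true_and, Fin.sum_univ_castSucc, Fin.snoc_castSucc,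
    Fin.snoc_last]
  convert hx using 1
  ring

theorem divisibility_tensor_mrank_general {d n : ℕ} (hn : 1 ≤ n)
    (M : (Fin d → Fin n) → ℝ)
    (hM : ∀ i, M i = if n ∣ ∑ j, ((i j : ℕ) + 1) then 1 else 0) :
    tmrank d n M = n ^ (d - 1) := by
  have hM' : M = fun i => if i ∈ dvdSumSet d n then 1 else 0 := by
    ext i; simp [hM, dvdSumSet]
  rw [hM', tmrank_indicator_eq_card _ (isHammingIndependent_dvdSumSet d n), card_dvdSumSet hn]

/-- The divisibility tensor M(i₁,…,i_d) = 1 iff n ∣ i₁ + ⋯ + i_d has monotone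
tensor rank exactly n^(d-1). -/
theorem divisibility_tensor_mrank {d n : ℕ} (hd : 2 ≤ d) (hn : 1 ≤ n)
    (M : (Fin d → Fin n) → ℝ)
    (hM : ∀ i, M i = if n ∣ ∑ j, ((i j : ℕ) + 1) then 1 else 0) :
    tmrank d n M = n ^ (d - 1) :=
  divisibility_tensor_mrank_general hn M hM
end

section
/- Let Z be a random variable on a finite sample space Ω, and let X, Y be random variables with values in a finite set S such that X and Y are conditionally independent given Z. Let P be the S×S matrix with P_{xy} = Prob(X = x, Y = y). Then the nonnegative rank of P is at most |Ω|. -/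
/-!
Conditioning on `Z` writes `P` as a sum over `z ∈ Ω` of the rank-one nonnegative matrices
`Prob(X = x, Z = z) · Prob(Y = y | Z = z)`.
-/

open Finset

theorem mrank_le_card_of_eq_sum {S T ι : Type*} [Fintype S] [Fintype T] [Fintype ι]
    (M : Matrix S T ℝ) (u : ι → S → ℝ) (v : ι → T → ℝ)
    (hu : ∀ i s, 0 ≤ u i s) (hv : ∀ i t, 0 ≤ v i t) (hM : ∀ s t, M s t = ∑ i, u i s * v i t) :
    mrank M ≤ Fintype.card ι := by
  let e := (Fintype.equivFin ι).symm
  refine Nat.sInf_le ⟨fun k => u (e k), fun k => v (e k), fun k => hu (e k), fun k => hv (e k),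
    fun s t => ?_⟩
  rw [hM, ← Equiv.sum_comp e]

theorem sum_filter_eq_sum_sum_filter_and_eq {T Ω M : Type*} [Fintype T] [Fintype Ω]
    [DecidableEq Ω] [AddCommMonoid M] (p : T → Prop) [DecidablePred p] (Z : T → Ω)
    (w : T → M) :
    ∑ t ∈ univ.filter p, w t = ∑ z, ∑ t ∈ univ.filter (fun t => p t ∧ Z t = z), w t := by
  simp only [← filter_filter, sum_fiberwise]

/-- Thanks to `c / 0 = 0`, this also covers `d = 0`: conditioning on a null event. -/
theorem eq_mul_div_of_mul_eq_mul {K : Type*} [Field K] {a b c d : K} (h : a * d = b * c) (hd : d = 0 → a = 0) :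
    a = b * (c / d) := by
  rcases eq_or_ne d 0 with rfl | hd0
  · simp [hd rfl]
  · rw [mul_div_assoc', eq_div_iff hd0, h]

theorem mrank_le_card_of_cond_indep_general {T Ω S : Type*}
    [Fintype T] [Fintype Ω] [Fintype S] [DecidableEq Ω] [DecidableEq S]
    (w : T → ℝ) (hw : ∀ t, 0 ≤ w t)
    (X Y : T → S) (Z : T → Ω)
    (hci : ∀ z x y,
      (∑ t ∈ Finset.univ.filter (fun t => X t = x ∧ Y t = y ∧ Z t = z), w t) *
        (∑ t ∈ Finset.univ.filter (fun t => Z t = z), w t) =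
      (∑ t ∈ Finset.univ.filter (fun t => X t = x ∧ Z t = z), w t) *
        (∑ t ∈ Finset.univ.filter (fun t => Y t = y ∧ Z t = z), w t))
    (P : Matrix S S ℝ)
    (hP : ∀ x y, P x y = ∑ t ∈ Finset.univ.filter (fun t => X t = x ∧ Y t = y), w t) :
    mrank P ≤ Fintype.card Ω := by
  have mass_nonneg : ∀ (p : T → Prop) [DecidablePred p], 0 ≤ ∑ t ∈ univ.filter p, w t :=
    fun _ _ => sum_nonneg fun t _ => hw t
  refine mrank_le_card_of_eq_sum P
    (fun z x => ∑ t ∈ univ.filter (fun t => X t = x ∧ Z t = z), w t)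
    (fun z y => (∑ t ∈ univ.filter (fun t => Y t = y ∧ Z t = z), w t) /
      ∑ t ∈ univ.filter (fun t => Z t = z), w t)
    (fun _ _ => mass_nonneg _) (fun _ _ => div_nonneg (mass_nonneg _) (mass_nonneg _))
    fun x y => ?_
  rw [hP, sum_filter_eq_sum_sum_filter_and_eq _ Z]
  refine sum_congr rfl fun z _ => eq_mul_div_of_mul_eq_mul ?_ fun hz => ?_
  · simpa only [and_assoc] using hci z x y
  · refine le_antisymm (hz ▸ sum_le_sum_of_subset_of_nonneg ?_ fun t _ _ => hw t) (mass_nonneg _)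
    exact monotone_filter_right _ fun _ _ => And.right

/-- If X, Y (with values in a finite set S) are conditionally independent given a
random variable Z with values in a finite set Ω — all on a finite probability
space (T, w) — then the joint-distribution matrix P_{xy} = Prob(X = x, Y = y)
has nonnegative rank at most |Ω|.  Conditional independence is expressed in the
cross-multiplied form
Prob(X=x,Y=y,Z=z)·Prob(Z=z) = Prob(X=x,Z=z)·Prob(Y=y,Z=z). -/
theorem mrank_le_card_of_cond_indep {T Ω S : Type*}
    [Fintype T] [Fintype Ω] [Fintype S] [DecidableEq Ω] [DecidableEq S]
    (w : T → ℝ) (hw : ∀ t, 0 ≤ w t) (hw1 : ∑ t, w t = 1)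
    (X Y : T → S) (Z : T → Ω)
    (hci : ∀ z x y,
      (∑ t ∈ Finset.univ.filter (fun t => X t = x ∧ Y t = y ∧ Z t = z), w t) *
        (∑ t ∈ Finset.univ.filter (fun t => Z t = z), w t) =
      (∑ t ∈ Finset.univ.filter (fun t => X t = x ∧ Z t = z), w t) *
        (∑ t ∈ Finset.univ.filter (fun t => Y t = y ∧ Z t = z), w t))
    (P : Matrix S S ℝ)
    (hP : ∀ x y, P x y = ∑ t ∈ Finset.univ.filter (fun t => X t = x ∧ Y t = y), w t) :
    mrank P ≤ Fintype.card Ω :=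
  mrank_le_card_of_cond_indep_general w hw X Y Z hci P hP
end
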